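/- Let K ∈ L¹(ℝ) ∩ L^∞(ℝ) and define the bilinear operator B(f,g)(x) := ∫_ℝ K(y) f(x+y) g(x−y) dy. Then for every t with 1 ≤ t ≤ ∞ there exists a constant C, depending only on t, ‖K‖_{L^1} and ‖K‖_{L^∞}, such that for all f, g ∈ L^t(ℝ) ∩ L¹(ℝ) ∩ L^∞(ℝ): ‖B(f,g)‖_{L^t} ≤ C ‖f‖_{L^t} ‖g‖_{L^t}. -/

import Mathlib

open MeasureTheory Complex ENNReal

noncomputable section

/-- Fourier transform with the convention `f̂ ξ = ∫ f x * exp (-I x ξ) dx`. -/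
def ft (f : ℝ → ℂ) (ξ : ℝ) : ℂ :=
  ∫ x : ℝ, f x * Complex.exp (-(Complex.I * x * ξ))

/-- Convolution of two complex-valued functions on `ℝ`. -/
def conv (f g : ℝ → ℂ) (x : ℝ) : ℂ :=
  ∫ y : ℝ, f y * g (x - y)

/-- The `L¹`-normalized dilate `Ψ_{2^{-k}}(x) = 2^k Ψ(2^k x)`, `k : ℕ`. -/
def dil (Ψ : ℝ → ℂ) (k : ℕ) (x : ℝ) : ℂ :=
  (2 : ℂ) ^ k * Ψ ((2 : ℝ) ^ k * x)

/-- The weighted Littlewood–Paley square function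
`x ↦ (∑_{k ≥ 0} 2^{2ks} |Ψ_{2^{-k}} ∗ f(x)|²)^{1/2}`. -/
def sqFn (Ψ : ℝ → ℂ) (s : ℝ) (f : ℝ → ℂ) (x : ℝ) : ℝ :=
  (∑' k : ℕ, (2 : ℝ) ^ (2 * (k : ℝ) * s) * ‖conv (dil Ψ k) f x‖ ^ 2) ^ (1/2 : ℝ)

/-- Littlewood–Paley Sobolev norm of `W^{s,p}`:
`‖Φ ∗ f‖_{L^p} + ‖(∑_{k≥0} 2^{2ks} |Ψ_{2^{-k}} ∗ f|²)^{1/2}‖_{L^p}`. -/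
def sobN (Φ Ψ : ℝ → ℂ) (s p : ℝ) (f : ℝ → ℂ) : ℝ≥0∞ :=
  eLpNorm (conv Φ f) (ENNReal.ofReal p) volume
    + eLpNorm (sqFn Ψ s f) (ENNReal.ofReal p) volume

/-- `Φ, Ψ` form an admissible Littlewood–Paley pair: `supp Ψ̂ ⊆ {1/2 ≤ |ξ| ≤ 2}`,
`supp Φ̂ ⊆ {|ξ| ≤ 1}` and `Φ̂(ξ) + ∑_{k≥0} Ψ̂(2^{-k} ξ) = 1`. -/
def LPpair (Φ Ψ : ℝ → ℂ) : Prop :=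
  (∀ ξ : ℝ, ft Ψ ξ ≠ 0 → 1/2 ≤ |ξ| ∧ |ξ| ≤ 2) ∧
  (∀ ξ : ℝ, ft Φ ξ ≠ 0 → |ξ| ≤ 1) ∧
  (∀ ξ : ℝ, ft Φ ξ + ∑' k : ℕ, ft Ψ ((2 : ℝ) ^ (-(k : ℤ)) * ξ) = 1)

/-- The bilinear pseudodifferential operator
`T_σ(f,g)(x) = ∫∫ e^{ix(ξ+η)} σ(x,ξ,η) f̂(ξ) ĝ(η) dξ dη`. -/
def Tsigma (σ : ℝ → ℝ → ℝ → ℂ) (f g : ℝ → ℂ) (x : ℝ) : ℂ :=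
  ∫ p : ℝ × ℝ,
    Complex.exp (Complex.I * x * (p.1 + p.2)) * σ x p.1 p.2 * ft f p.1 * ft g p.2

/-- The linear symbol class `S⁰₁,₁`: smooth with
`|∂_x^α ∂_ξ^β τ(x,ξ)| ≤ C_{αβ} (1+|ξ|)^{α-β}`. -/
def S011 (τ : ℝ → ℝ → ℂ) : Prop :=
  ContDiff ℝ (⊤ : ℕ∞) (fun p : ℝ × ℝ => τ p.1 p.2) ∧
  ∀ α β : ℕ, ∃ C : ℝ, ∀ x ξ : ℝ,
    ‖iteratedDeriv α (fun x' => iteratedDeriv β (fun ξ' => τ x' ξ') ξ) x‖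
      ≤ C * (1 + |ξ|) ^ ((α : ℤ) - (β : ℤ))

/-- The bilinear symbol class `BS⁰₁,₁;π/4`: smooth with
`|∂_x^α ∂_ξ^β ∂_η^γ σ(x,ξ,η)| ≤ C_{αβγ} (1+|ξ-η|)^{α-β-γ}`. -/
def BS011 (σ : ℝ → ℝ → ℝ → ℂ) : Prop :=
  ContDiff ℝ (⊤ : ℕ∞) (fun p : ℝ × ℝ × ℝ => σ p.1 p.2.1 p.2.2) ∧
  ∀ α β γ : ℕ, ∃ C : ℝ, ∀ x ξ η : ℝ,
    ‖iteratedDeriv α (fun x' =>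
        iteratedDeriv β (fun ξ' => iteratedDeriv γ (fun η' => σ x' ξ' η') η) ξ) x‖
      ≤ C * (1 + |ξ - η|) ^ ((α : ℤ) - (β : ℤ) - (γ : ℤ))

/-- The bilinear kernel operator `B(f,g)(x) = ∫ K(y) f(x+y) g(x-y) dy`. -/
def Bop (K f g : ℝ → ℂ) (x : ℝ) : ℂ :=
  ∫ y : ℝ, K y * f (x + y) * g (x - y)

section AuxKernel

open Filter

private lemma lint_shift (h : ℝ → ℝ≥0∞) (a : ℝ) :
    ∫⁻ y : ℝ, h (y + a) = ∫⁻ y, h y :=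
  lintegral_add_right_eq_self h a

private lemma lint_neg (h : ℝ → ℝ≥0∞) : ∫⁻ y : ℝ, h (-y) = ∫⁻ y, h y := by
  have := (MeasureTheory.lintegral_map_equiv (μ := (volume : Measure ℝ)) h
    (MeasurableEquiv.neg ℝ))
  rw [show Measure.map (MeasurableEquiv.neg ℝ) (volume : Measure ℝ)
      = Measure.map Neg.neg (volume : Measure ℝ) from rfl,
    Measure.map_neg_eq_self] at this
  exact this.symm

private lemma lint_sub_left (h : ℝ → ℝ≥0∞) (a : ℝ) :
    ∫⁻ y : ℝ, h (a - y) = ∫⁻ y, h y := by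
  simp_rw [sub_eq_add_neg]
  rw [show (fun y : ℝ => h (a + -y)) = fun y : ℝ => (fun z => h (a + z)) (-y) from rfl,
    lint_neg (fun z => h (a + z))]
  exact lintegral_add_left_eq_self (fun z => h z) a

private lemma lint_two_mul {h : ℝ → ℝ≥0∞} (hm : Measurable h) :
    ∫⁻ x : ℝ, h (2 * x) ≤ ∫⁻ x, h x := by
  have h1 : ∫⁻ x : ℝ, h (2 * x) = ∫⁻ a, h a ∂(Measure.map (fun x : ℝ => 2 * x) volume) :=
    (lintegral_map hm (measurable_const_mul 2)).symm
  rw [h1, show (fun x : ℝ => 2 * x) = (((2 : ℝ) * ·)) from rfl,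
    Real.map_volume_mul_left (two_ne_zero), lintegral_smul_measure]
  refine mul_le_of_le_one_left zero_le ?_
  rw [ENNReal.ofReal_le_one, abs_inv, _root_.abs_two]
  norm_num

private lemma mp_sub_left (a : ℝ) :
    MeasureTheory.MeasurePreserving (fun y : ℝ => a - y) volume volume := by
  simpa [sub_eq_add_neg, Function.comp_def] using
    (MeasureTheory.measurePreserving_add_left (volume : Measure ℝ) a).comp
      (MeasureTheory.Measure.measurePreserving_neg (volume : Measure ℝ))

private lemma Bop_bound (K f g : ℝ → ℂ) (hK : Measurable K) (hf : Measurable f)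
    (hg : Measurable g) {t : ℝ≥0∞} (ht : 1 ≤ t) :
    eLpNorm (Bop K f g) t volume ≤
      (eLpNorm K 1 volume + eLpNorm K ⊤ volume + 1) * eLpNorm f t volume * eLpNorm g t volume := by
  set A : ℝ≥0∞ := ∫⁻ y, ‖K y‖₊ with hA
  set M : ℝ≥0∞ := eLpNormEssSup K volume with hM
  have hCeq : eLpNorm K 1 volume + eLpNorm K ⊤ volume + 1 = A + M + 1 := by
    rw [eLpNorm_one_eq_lintegral_enorm, eLpNorm_exponent_top]; rfl
  set C : ℝ≥0∞ := A + M + 1 with hC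
  rw [hCeq]
  have hAC : A ≤ C := le_self_add.trans le_self_add
  have hMC : M ≤ C := le_add_self.trans le_self_add
  -- pointwise bound on the operator
  have hBpt : ∀ x, (‖Bop K f g x‖₊ : ℝ≥0∞)
      ≤ ∫⁻ y, (‖K y‖₊ : ℝ≥0∞) * ((‖f (x + y)‖₊ : ℝ≥0∞) * (‖g (x - y)‖₊ : ℝ≥0∞)) := by
    intro x
    refine (enorm_integral_le_lintegral_enorm _).trans_eq ?_
    congr 1; funext y
    simp [nnnorm_mul, ENNReal.coe_mul, mul_assoc]; rfl
  by_cases htop : t = ⊤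
  · -- L^∞ endpoint
    subst htop
    rw [eLpNorm_exponent_top, eLpNorm_exponent_top, eLpNorm_exponent_top]
    have key : ∀ x, (‖Bop K f g x‖₊ : ℝ≥0∞)
        ≤ A * (eLpNormEssSup f volume * eLpNormEssSup g volume) := by
      intro x
      refine (hBpt x).trans ?_
      have h1 : ∀ᵐ y : ℝ ∂volume, (‖f (x + y)‖₊ : ℝ≥0∞) ≤ eLpNormEssSup f volume :=
        (measurePreserving_add_left volume x).quasiMeasurePreserving.ae
          (ae_le_eLpNormEssSup (f := f))
      have h2 : ∀ᵐ y : ℝ ∂volume, (‖g (x - y)‖₊ : ℝ≥0∞) ≤ eLpNormEssSup g volume :=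
        (mp_sub_left x).quasiMeasurePreserving.ae (ae_le_eLpNormEssSup (f := g))
      calc ∫⁻ y, (‖K y‖₊ : ℝ≥0∞) * ((‖f (x + y)‖₊ : ℝ≥0∞) * (‖g (x - y)‖₊ : ℝ≥0∞))
          ≤ ∫⁻ y, (‖K y‖₊ : ℝ≥0∞) * (eLpNormEssSup f volume * eLpNormEssSup g volume) := by
            refine lintegral_mono_ae ?_
            filter_upwards [h1, h2] with y hy1 hy2
            exact mul_le_mul_right (mul_le_mul' hy1 hy2) _
        _ = A * (eLpNormEssSup f volume * eLpNormEssSup g volume) :=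
            lintegral_mul_const _ hK.enorm
    calc eLpNormEssSup (Bop K f g) volume
        ≤ A * (eLpNormEssSup f volume * eLpNormEssSup g volume) :=
          essSup_le_of_ae_le _ (Eventually.of_forall key)
      _ = A * eLpNormEssSup f volume * eLpNormEssSup g volume := by ring
      _ ≤ C * eLpNormEssSup f volume * eLpNormEssSup g volume :=
          mul_le_mul_left (mul_le_mul_left hAC _) _
  · -- finite exponent
    have ht0 : t ≠ 0 := (zero_lt_one.trans_le ht).ne'
    set q : ℝ := t.toReal with hq
    have hq1 : 1 ≤ q := by
      have := ENNReal.toReal_mono htop ht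
      simpa using this
    have hq0 : 0 < q := lt_of_lt_of_le one_pos hq1
    -- measurability helpers
    have hKm : Measurable fun y : ℝ => (‖K y‖₊ : ℝ≥0∞) := hK.enorm
    have hfm : Measurable fun u : ℝ => (‖f u‖₊ : ℝ≥0∞) := hf.enorm
    have hgm : Measurable fun v : ℝ => (‖g v‖₊ : ℝ≥0∞) := hg.enorm
    set F1 : ℝ → ℝ≥0∞ := fun u => (‖f u‖₊ : ℝ≥0∞) ^ q with hF1
    set G1 : ℝ → ℝ≥0∞ := fun v => (‖g v‖₊ : ℝ≥0∞) ^ q with hG1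
    have hF1m : Measurable F1 := hfm.pow_const q
    have hG1m : Measurable G1 := hgm.pow_const q
    set Fq : ℝ≥0∞ := ∫⁻ u, F1 u with hFq
    set Gq : ℝ≥0∞ := ∫⁻ v, G1 v with hGq
    set Ψ : ℝ → ℝ≥0∞ := fun x =>
      ∫⁻ y, (‖K y‖₊ : ℝ≥0∞) * ((‖f (x + y)‖₊ : ℝ≥0∞) * (‖g (x - y)‖₊ : ℝ≥0∞)) ^ q with hΨ
    have hΨm : Measurable Ψ := by
      apply Measurable.lintegral_prod_right'
        (f := fun p : ℝ × ℝ => (‖K p.2‖₊ : ℝ≥0∞)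
          * ((‖f (p.1 + p.2)‖₊ : ℝ≥0∞) * (‖g (p.1 - p.2)‖₊ : ℝ≥0∞)) ^ q)
      exact (hKm.comp measurable_snd).mul
        (((hfm.comp (measurable_fst.add measurable_snd)).mul
          (hgm.comp (measurable_fst.sub measurable_snd))).pow_const q)
    -- Step 2: Hölder in `y`
    have step2 : ∀ x, (∫⁻ y, (‖K y‖₊ : ℝ≥0∞)
          * ((‖f (x + y)‖₊ : ℝ≥0∞) * (‖g (x - y)‖₊ : ℝ≥0∞)))
        ≤ A ^ (1 - 1 / q) * Ψ x ^ (1 / q) := by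
      intro x
      set h : ℝ → ℝ≥0∞ := fun y => (‖f (x + y)‖₊ : ℝ≥0∞) * (‖g (x - y)‖₊ : ℝ≥0∞) with hh
      have hhm : Measurable h :=
        (hfm.comp (measurable_const_add x)).mul (hgm.comp (measurable_const_sub x))
      rcases eq_or_lt_of_le hq1 with hq1' | hq1'
      · -- q = 1
        have h0 : (1 : ℝ) - 1 / q = 0 := by rw [← hq1']; norm_num
        rw [h0, ENNReal.rpow_zero, one_mul]
        have h2 : Ψ x ^ (1 / q) = Ψ x := by rw [← hq1']; simp
        rw [h2, hΨ]
        refine le_of_eq (lintegral_congr fun y => ?_)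
        rw [← hq1', ENNReal.rpow_one]
      · -- 1 < q
        have hpq : (Real.conjExponent q).HolderConjugate q :=
          (Real.HolderConjugate.conjExponent hq1').symm
        set p : ℝ := Real.conjExponent q with hp
        have hp0 : 0 < p := hpq.pos
        have hinv : 1 / p = 1 - 1 / q := by
          have := hpq.inv_add_inv_eq_one
          rw [one_div, one_div]
          linarith
        have key := ENNReal.lintegral_mul_le_Lp_mul_Lq (volume : Measure ℝ) hpq
          (f := fun y => (‖K y‖₊ : ℝ≥0∞) ^ (1 / p))
          (g := fun y => ((‖K y‖₊ : ℝ≥0∞) * h y ^ q) ^ (1 / q))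
          ((hKm.pow_const _).aemeasurable) (((hKm.mul (hhm.pow_const _)).pow_const _).aemeasurable)
        have e1 : ∀ y : ℝ, ((‖K y‖₊ : ℝ≥0∞) ^ (1 / p)) * (((‖K y‖₊ : ℝ≥0∞) * h y ^ q) ^ (1 / q))
            = (‖K y‖₊ : ℝ≥0∞) * h y := by
          intro y
          rw [ENNReal.mul_rpow_of_nonneg _ _ (by positivity : (0:ℝ) ≤ 1 / q),
            ← ENNReal.rpow_mul (h y) q (1 / q), mul_one_div_cancel hq0.ne', ENNReal.rpow_one,
            ← mul_assoc,
            ← ENNReal.rpow_add_of_nonneg _ _ (by positivity : (0:ℝ) ≤ 1 / p)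
              (by positivity : (0:ℝ) ≤ 1 / q)]
          congr 1
          have : 1 / p + 1 / q = 1 := by
            rw [one_div, one_div]; exact hpq.inv_add_inv_eq_one
          rw [this, ENNReal.rpow_one]
        have e2 : ∀ y : ℝ, ((‖K y‖₊ : ℝ≥0∞) ^ (1 / p)) ^ p = (‖K y‖₊ : ℝ≥0∞) := by
          intro y
          rw [← ENNReal.rpow_mul, one_div, inv_mul_cancel₀ hp0.ne', ENNReal.rpow_one]
        have e3 : ∀ y : ℝ, (((‖K y‖₊ : ℝ≥0∞) * h y ^ q) ^ (1 / q)) ^ q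
            = (‖K y‖₊ : ℝ≥0∞) * h y ^ q := by
          intro y
          rw [← ENNReal.rpow_mul, one_div, inv_mul_cancel₀ hq0.ne', ENNReal.rpow_one]
        simp only [Pi.mul_apply, e1] at key
        refine key.trans ?_
        apply mul_le_mul'
        · refine le_of_eq ?_
          rw [lintegral_congr fun y => e2 y, hinv]
        · refine le_of_eq ?_
          rw [hΨ]
          exact congrArg (· ^ (1 / q)) (lintegral_congr fun y => e3 y)
    -- Step 4: bound on ∫ Ψ
    have step4 : ∫⁻ x, Ψ x ≤ Fq * (M * Gq) := by
      have hΨeq : ∀ x, Ψ x = ∫⁻ u, (‖K (u - x)‖₊ : ℝ≥0∞)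
          * ((‖f u‖₊ : ℝ≥0∞) * (‖g (2 * x - u)‖₊ : ℝ≥0∞)) ^ q := by
        intro x
        simp only [hΨ]
        have hs := lint_shift (fun y => (‖K y‖₊ : ℝ≥0∞)
          * ((‖f (x + y)‖₊ : ℝ≥0∞) * (‖g (x - y)‖₊ : ℝ≥0∞)) ^ q) (-x)
        rw [← hs]
        refine (lintegral_congr fun u => ?_).symm
        have e1 : u + -x = u - x := by ring
        have e2 : x + (u - x) = u := by ring
        have e3 : x - (u - x) = 2 * x - u := by ring
        rw [e1, e2, e3]
      simp_rw [hΨeq]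
      rw [lintegral_lintegral_swap]
      · have inner_bound : ∀ u : ℝ, (∫⁻ x, (‖K (u - x)‖₊ : ℝ≥0∞)
            * ((‖f u‖₊ : ℝ≥0∞) * (‖g (2 * x - u)‖₊ : ℝ≥0∞)) ^ q) ≤ F1 u * (M * Gq) := by
          intro u
          have rearr : ∀ x : ℝ, (‖K (u - x)‖₊ : ℝ≥0∞)
              * ((‖f u‖₊ : ℝ≥0∞) * (‖g (2 * x - u)‖₊ : ℝ≥0∞)) ^ q
              = F1 u * ((‖K (u - x)‖₊ : ℝ≥0∞) * (‖g (2 * x - u)‖₊ : ℝ≥0∞) ^ q) := by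
            intro x
            rw [ENNReal.mul_rpow_of_nonneg _ _ hq0.le, hF1]
            ring
          simp_rw [rearr]
          have hmeas1 : Measurable fun x : ℝ =>
              (‖K (u - x)‖₊ : ℝ≥0∞) * (‖g (2 * x - u)‖₊ : ℝ≥0∞) ^ q := by
            apply Measurable.mul
            · exact hKm.comp (measurable_const_sub u)
            · exact (hgm.comp ((measurable_const_mul 2).sub measurable_const)).pow_const q
          rw [lintegral_const_mul _ hmeas1]
          apply mul_le_mul_right
          have hKae : ∀ᵐ x : ℝ ∂volume, (‖K (u - x)‖₊ : ℝ≥0∞) ≤ M :=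
            (mp_sub_left u).quasiMeasurePreserving.ae (ae_le_eLpNormEssSup (f := K))
          calc ∫⁻ x, (‖K (u - x)‖₊ : ℝ≥0∞) * (‖g (2 * x - u)‖₊ : ℝ≥0∞) ^ q
              ≤ ∫⁻ x, M * (‖g (2 * x - u)‖₊ : ℝ≥0∞) ^ q := by
                refine lintegral_mono_ae ?_
                filter_upwards [hKae] with x hx
                exact mul_le_mul_left hx _
            _ = M * ∫⁻ x, (‖g (2 * x - u)‖₊ : ℝ≥0∞) ^ q :=
                lintegral_const_mul _
                  ((hgm.comp ((measurable_const_mul 2).sub measurable_const)).pow_const q)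
            _ ≤ M * Gq := by
                apply mul_le_mul_right
                have sub1 : ∫⁻ x : ℝ, (‖g (2 * x - u)‖₊ : ℝ≥0∞) ^ q
                    = ∫⁻ x : ℝ, (fun w : ℝ => G1 (w - u)) (2 * x) :=
                  lintegral_congr fun x => rfl
                rw [sub1]
                refine (lint_two_mul (h := fun w : ℝ => G1 (w - u))
                  (hG1m.comp (measurable_id.sub measurable_const))).trans ?_
                rw [hGq]
                refine le_of_eq ?_
                have hs := lint_shift G1 (-u)
                simp_rw [← sub_eq_add_neg] at hs
                exact hs
        calc ∫⁻ u, ∫⁻ x, (‖K (u - x)‖₊ : ℝ≥0∞)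
              * ((‖f u‖₊ : ℝ≥0∞) * (‖g (2 * x - u)‖₊ : ℝ≥0∞)) ^ q
            ≤ ∫⁻ u, F1 u * (M * Gq) := lintegral_mono fun u => inner_bound u
          _ = Fq * (M * Gq) := lintegral_mul_const _ hF1m
      · -- joint measurability for the swap
        apply Measurable.aemeasurable
        exact (hKm.comp (measurable_snd.sub measurable_fst)).mul
          (((hfm.comp measurable_snd).mul
            (hgm.comp ((measurable_fst.const_mul 2).sub measurable_snd))).pow_const q)
    -- Combine
    rw [eLpNorm_eq_lintegral_rpow_enorm_toReal ht0 htop, eLpNorm_eq_lintegral_rpow_enorm_toReal ht0 htop,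
      eLpNorm_eq_lintegral_rpow_enorm_toReal ht0 htop, ← hq]
    have main : ∫⁻ x, (‖Bop K f g x‖₊ : ℝ≥0∞) ^ q ≤ A ^ (q - 1) * (Fq * (M * Gq)) := by
      calc ∫⁻ x, (‖Bop K f g x‖₊ : ℝ≥0∞) ^ q
          ≤ ∫⁻ x, (A ^ (1 - 1 / q) * Ψ x ^ (1 / q)) ^ q :=
            lintegral_mono fun x => ENNReal.rpow_le_rpow ((hBpt x).trans (step2 x)) hq0.le
        _ = ∫⁻ x, A ^ (q - 1) * Ψ x := by
            refine lintegral_congr fun x => ?_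
            rw [ENNReal.mul_rpow_of_nonneg _ _ hq0.le, ← ENNReal.rpow_mul,
              ← ENNReal.rpow_mul]
            congr 2
            · field_simp
            · field_simp; rw [ENNReal.rpow_one]
        _ = A ^ (q - 1) * ∫⁻ x, Ψ x := lintegral_const_mul _ hΨm
        _ ≤ A ^ (q - 1) * (Fq * (M * Gq)) := mul_le_mul_right step4 _
    calc (∫⁻ x, (‖Bop K f g x‖₊ : ℝ≥0∞) ^ q) ^ (1 / q)
        ≤ (A ^ (q - 1) * (Fq * (M * Gq))) ^ (1 / q) :=
          ENNReal.rpow_le_rpow main (by positivity)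
      _ = (A ^ (q - 1)) ^ (1 / q) * M ^ (1 / q) * (Fq ^ (1 / q) * Gq ^ (1 / q)) := by
          rw [ENNReal.mul_rpow_of_nonneg _ _ (by positivity : (0:ℝ) ≤ 1 / q),
            ENNReal.mul_rpow_of_nonneg Fq _ (by positivity : (0:ℝ) ≤ 1 / q),
            ENNReal.mul_rpow_of_nonneg M Gq (by positivity : (0:ℝ) ≤ 1 / q)]
          ring
      _ ≤ C ^ ((q - 1) * (1 / q)) * C ^ (1 / q) * (Fq ^ (1 / q) * Gq ^ (1 / q)) := by
          apply mul_le_mul_left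
          apply mul_le_mul'
          · rw [← ENNReal.rpow_mul]
            exact ENNReal.rpow_le_rpow hAC
              (mul_nonneg (by linarith : (0:ℝ) ≤ q - 1) (by positivity))
          · exact ENNReal.rpow_le_rpow hMC (by positivity)
      _ = C * (Fq ^ (1 / q) * Gq ^ (1 / q)) := by
          rw [← ENNReal.rpow_add_of_nonneg _ _
            (mul_nonneg (by linarith : (0:ℝ) ≤ q - 1) (by positivity : (0:ℝ) ≤ 1 / q))
            (by positivity : (0:ℝ) ≤ 1 / q)]
          congr 1
          have hsum : (q - 1) * (1 / q) + 1 / q = 1 := by field_simp; ring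
          rw [hsum, ENNReal.rpow_one]
      _ = C * Fq ^ (1 / q) * Gq ^ (1 / q) := by ring

end AuxKernel

/-- by bilinear interpolation, `B` is bounded on `L^t × L^t → L^t`, `1 ≤ t ≤ ∞`. -/
theorem kernel_operator_interpolated
    (K : ℝ → ℂ) (hK1 : MemLp K 1 volume) (hKtop : MemLp K ⊤ volume)
    (t : ℝ≥0∞) (ht : 1 ≤ t) :
    ∃ C : ℝ≥0∞, C ≠ ⊤ ∧ ∀ f g : ℝ → ℂ,
      MemLp f t volume → MemLp f 1 volume → MemLp f ⊤ volume →
      MemLp g t volume → MemLp g 1 volume → MemLp g ⊤ volume →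
      eLpNorm (Bop K f g) t volume ≤ C * eLpNorm f t volume * eLpNorm g t volume := by
  -- replace K, f, g by measurable representatives
  obtain ⟨K', hK'm, hK'ae⟩ : ∃ K' : ℝ → ℂ, Measurable K' ∧ K =ᵐ[volume] K' :=
    ⟨hK1.1.mk K, hK1.1.measurable_mk, hK1.1.ae_eq_mk⟩
  refine ⟨eLpNorm K 1 volume + eLpNorm K ⊤ volume + 1, ?_, ?_⟩
  · simp only [ne_eq, ENNReal.add_eq_top, not_or]
    exact ⟨⟨hK1.2.ne, hKtop.2.ne⟩, ENNReal.one_ne_top⟩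
  intro f g hft hf1 hfi hgt hg1 hgi
  obtain ⟨f', hf'm, hf'ae⟩ : ∃ f' : ℝ → ℂ, Measurable f' ∧ f =ᵐ[volume] f' :=
    ⟨hft.1.mk f, hft.1.measurable_mk, hft.1.ae_eq_mk⟩
  obtain ⟨g', hg'm, hg'ae⟩ : ∃ g' : ℝ → ℂ, Measurable g' ∧ g =ᵐ[volume] g' :=
    ⟨hgt.1.mk g, hgt.1.measurable_mk, hgt.1.ae_eq_mk⟩
  have hBeq : Bop K f g = Bop K' f' g' := by
    funext x
    apply integral_congr_ae
    have h1 : ∀ᵐ y : ℝ ∂volume, f (x + y) = f' (x + y) :=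
      (measurePreserving_add_left volume x).quasiMeasurePreserving.ae hf'ae
    have h2 : ∀ᵐ y : ℝ ∂volume, g (x - y) = g' (x - y) :=
      (mp_sub_left x).quasiMeasurePreserving.ae hg'ae
    filter_upwards [hK'ae, h1, h2] with y hy1 hy2 hy3
    rw [hy1, hy2, hy3]
  have hnorms : eLpNorm K 1 volume = eLpNorm K' 1 volume ∧
      eLpNorm K ⊤ volume = eLpNorm K' ⊤ volume ∧
      eLpNorm f t volume = eLpNorm f' t volume ∧
      eLpNorm g t volume = eLpNorm g' t volume :=
    ⟨eLpNorm_congr_ae hK'ae, eLpNorm_congr_ae hK'ae, eLpNorm_congr_ae hf'ae,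
      eLpNorm_congr_ae hg'ae⟩
  rw [hBeq, hnorms.1, hnorms.2.1, hnorms.2.2.1, hnorms.2.2.2]
  exact Bop_bound K' f' g' hK'm hf'm hg'm ht
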